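/- arXiv:2101.12704 — 2 statements merged into one kernel-verified Lean document; each statement's English description precedes it below -/
import Mathlib

section
/- Let U be a fixed m × m real diagonal matrix whose diagonal entries all have absolute value at most ε (modeling relative quantization error, so that the quantizer output of A(r)·u is (I_m − U)·A(r)·u). Then for every u ∈ ℝ^d, 𝔼_r‖u − (m/d)·A(r)ᵀ·(I_m − U)·A(r)·u‖² ≤ (1 − m/d + (m/d)·ε²)·‖u‖². -/
/-!
Write `p = A(r) u`. Since `A Aᵀ = (d/m) I`, expanding the square gives the exact identity
`‖u - (m/d) Aᵀ (I - U) p‖² = ‖u‖² - (m/d) (‖p‖² - ‖U p‖²) ≤ ‖u‖² - (m/d) (1 - ε²) ‖p‖²`.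
Averaging over the signs, `𝔼 ‖A(r) u‖² = ‖u‖²`: the products `r_j r_j'` average to `δ_jj'`
and every entry of `H` squares to `1`.
-/

open Matrix BigOperators

/-- The random linear coding matrix `A(r) = (1/√m)·H·diag(r)`. -/
noncomputable def rlcA (m d : ℕ) (H : Matrix (Fin m) (Fin d) ℝ) (r : Fin d → ℝ) :
    Matrix (Fin m) (Fin d) ℝ :=
  (Real.sqrt m)⁻¹ • (H * Matrix.diagonal r)

/-- The sign vector in `{−1,+1}^d` encoded by a Boolean vector. -/
def signVec {d : ℕ} (s : Fin d → Bool) : Fin d → ℝ := fun i => if s i then 1 else -1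

section QuadraticForm

variable {ι κ : Type*} [Fintype ι] [Fintype κ]

lemma norm_symm_equiv_sq (w : ι → ℝ) :
    ‖(WithLp.equiv 2 (ι → ℝ)).symm w‖ ^ 2 = w ⬝ᵥ w := by
  rw [← real_inner_self_eq_norm_sq]
  rfl

lemma diagonal_mulVec_dotProduct_self_le [DecidableEq κ] {w : κ → ℝ} {ε : ℝ}
    (hw : ∀ k, |w k| ≤ ε) (p : κ → ℝ) :
    (diagonal w *ᵥ p) ⬝ᵥ (diagonal w *ᵥ p) ≤ ε ^ 2 * (p ⬝ᵥ p) := by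
  simp only [dotProduct, mulVec_diagonal, Finset.mul_sum]
  refine Finset.sum_le_sum fun k _ => ?_
  have hwk : w k ^ 2 ≤ ε ^ 2 := sq_le_sq' (abs_le.mp (hw k)).1 (abs_le.mp (hw k)).2
  nlinarith [mul_self_nonneg (p k)]

lemma dotProduct_self_sub_smul_transpose_mulVec [DecidableEq κ] (A : Matrix κ ι ℝ) (c : ℝ)
    (hA : A * Aᵀ = c⁻¹ • (1 : Matrix κ κ ℝ)) (U : Matrix κ κ ℝ) (v : ι → ℝ) :
    (v - c • (Aᵀ *ᵥ ((1 - U) *ᵥ (A *ᵥ v)))) ⬝ᵥ (v - c • (Aᵀ *ᵥ ((1 - U) *ᵥ (A *ᵥ v))))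
      = v ⬝ᵥ v + c * ((U *ᵥ (A *ᵥ v)) ⬝ᵥ (U *ᵥ (A *ᵥ v)) - (A *ᵥ v) ⬝ᵥ (A *ᵥ v)) := by
  set p := A *ᵥ v
  set q := U *ᵥ p
  have hz : (1 - U) *ᵥ p = p - q := by rw [sub_mulVec, one_mulVec]
  have hcross : v ⬝ᵥ (Aᵀ *ᵥ (p - q)) = p ⬝ᵥ (p - q) := by
    rw [dotProduct_mulVec, vecMul_transpose]
  have hquad : (Aᵀ *ᵥ (p - q)) ⬝ᵥ (Aᵀ *ᵥ (p - q)) = c⁻¹ * ((p - q) ⬝ᵥ (p - q)) := by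
    rw [dotProduct_mulVec, vecMul_transpose, mulVec_mulVec, hA, smul_mulVec, one_mulVec,
      smul_dotProduct, smul_eq_mul]
  rw [hz, sub_dotProduct, dotProduct_sub, dotProduct_sub, smul_dotProduct, dotProduct_smul,
    dotProduct_smul, smul_dotProduct, dotProduct_comm (Aᵀ *ᵥ (p - q)) v, hcross, hquad]
  simp only [smul_eq_mul, dotProduct_sub, sub_dotProduct, dotProduct_comm q p]
  -- `c² · c⁻¹ = c` (also for `c = 0`) merges the quadratic term into the cross term.
  linear_combination (p ⬝ᵥ p - 2 * (p ⬝ᵥ q) + q ⬝ᵥ q) * mul_self_mul_inv c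

lemma dotProduct_self_sub_smul_transpose_mulVec_le [DecidableEq κ] (A : Matrix κ ι ℝ) {c : ℝ}
    (hc : 0 ≤ c) (hA : A * Aᵀ = c⁻¹ • (1 : Matrix κ κ ℝ)) {w : κ → ℝ} {ε : ℝ}
    (hw : ∀ k, |w k| ≤ ε) (v : ι → ℝ) :
    (v - c • (Aᵀ *ᵥ ((1 - diagonal w) *ᵥ (A *ᵥ v)))) ⬝ᵥ
        (v - c • (Aᵀ *ᵥ ((1 - diagonal w) *ᵥ (A *ᵥ v))))
      ≤ v ⬝ᵥ v + c * (ε ^ 2 - 1) * ((A *ᵥ v) ⬝ᵥ (A *ᵥ v)) := by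
  rw [dotProduct_self_sub_smul_transpose_mulVec A c hA]
  nlinarith [mul_le_mul_of_nonneg_left (diagonal_mulVec_dotProduct_self_le hw (A *ᵥ v)) hc]

end QuadraticForm

section Rademacher

variable {d : ℕ}

lemma signVec_mul_self (s : Fin d → Bool) (j : Fin d) : signVec s j * signVec s j = 1 := by
  unfold signVec; split_ifs <;> norm_num

/-- Flipping the `j`-th sign is a bijection of `{±1}^d` that negates `r_j r_{j'}`. -/
lemma sum_signVec_mul_signVec_of_ne {j j' : Fin d} (h : j ≠ j') :
    ∑ s : Fin d → Bool, signVec s j * signVec s j' = 0 := by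
  set flip := fun s : Fin d → Bool => Function.update s j (!(s j))
  have hflip_involutive : Function.Involutive flip := fun s => by
    funext i; by_cases hi : i = j
    · subst hi; simp [flip]
    · simp [flip, Function.update_of_ne hi]
  have hflip : ∀ s, signVec (flip s) j * signVec (flip s) j' = -(signVec s j * signVec s j') := by
    intro s
    simp only [flip, signVec, Function.update_self, Function.update_of_ne h.symm]
    cases s j <;> cases s j' <;> norm_num
  have := Equiv.sum_comp hflip_involutive.toPerm fun s => signVec s j * signVec s j'
  simp only [Function.Involutive.coe_toPerm, hflip, Finset.sum_neg_distrib] at this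
  linarith

lemma sum_sq_sum_mul_signVec (a : Fin d → ℝ) :
    ∑ s : Fin d → Bool, (∑ j, a j * signVec s j) ^ 2 = 2 ^ d * ∑ j, a j ^ 2 := by
  have hdiag : ∀ j, ∑ s : Fin d → Bool, ∑ j', a j * a j' * (signVec s j * signVec s j')
      = 2 ^ d * a j ^ 2 := by
    intro j
    rw [Finset.sum_comm, Finset.sum_eq_single j]
    · simp only [signVec_mul_self, mul_one, Finset.sum_const, Finset.card_univ, Fintype.card_fun,
        Fintype.card_bool, Fintype.card_fin, nsmul_eq_mul, Nat.cast_pow, Nat.cast_ofNat]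
      ring
    · intro j' _ hj'
      rw [← Finset.mul_sum, sum_signVec_mul_signVec_of_ne (Ne.symm hj'), mul_zero]
    · simp
  calc ∑ s : Fin d → Bool, (∑ j, a j * signVec s j) ^ 2
      = ∑ j, ∑ s : Fin d → Bool, ∑ j', a j * a j' * (signVec s j * signVec s j') := by
        rw [Finset.sum_comm]
        refine Finset.sum_congr rfl fun s _ => ?_
        rw [sq, Finset.sum_mul_sum]
        exact Finset.sum_congr rfl fun j _ => Finset.sum_congr rfl fun j' _ => by ring
    _ = 2 ^ d * ∑ j, a j ^ 2 := by simp only [hdiag, Finset.mul_sum]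

end Rademacher

section RandomLinearCode

variable {m d : ℕ} (H : Matrix (Fin m) (Fin d) ℝ)

lemma rlcA_mul_transpose (horth : H * Hᵀ = (d : ℝ) • (1 : Matrix (Fin m) (Fin m) ℝ))
    (s : Fin d → Bool) :
    rlcA m d H (signVec s) * (rlcA m d H (signVec s))ᵀ
      = ((m : ℝ) / d)⁻¹ • (1 : Matrix (Fin m) (Fin m) ℝ) := by
  have hsign : diagonal (signVec s) * (diagonal (signVec s))ᵀ = 1 := by
    rw [diagonal_transpose, diagonal_mul_diagonal, ← diagonal_one]
    exact congrArg diagonal (funext (signVec_mul_self s))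
  have hsqrt : (Real.sqrt m)⁻¹ * (Real.sqrt m)⁻¹ = (m : ℝ)⁻¹ := by
    rw [← mul_inv, Real.mul_self_sqrt (Nat.cast_nonneg m)]
  rw [rlcA, transpose_smul, Matrix.smul_mul, Matrix.mul_smul, smul_smul, hsqrt, transpose_mul,
    Matrix.mul_assoc, ← Matrix.mul_assoc (diagonal _), hsign, Matrix.one_mul, horth, smul_smul,
    inv_div, div_eq_inv_mul]

/-- Row `k` of `A(r) v` is `m^{-1/2} ∑_j H_{kj} v_j r_j`, whose second moment is
`m⁻¹ ∑_j v_j²` because `H_{kj}² = 1`. -/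
lemma sum_rlcA_mulVec_dotProduct_self (hm : 0 < m) (hH : ∀ k j, H k j ^ 2 = 1)
    (v : Fin d → ℝ) :
    ∑ s : Fin d → Bool, (rlcA m d H (signVec s) *ᵥ v) ⬝ᵥ (rlcA m d H (signVec s) *ᵥ v)
      = 2 ^ d * (v ⬝ᵥ v) := by
  have hrow : ∀ s : Fin d → Bool,
      (rlcA m d H (signVec s) *ᵥ v) ⬝ᵥ (rlcA m d H (signVec s) *ᵥ v)
        = (m : ℝ)⁻¹ * ∑ k, (∑ j, H k j * v j * signVec s j) ^ 2 := by
    intro s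
    have hdiag : diagonal (signVec s) *ᵥ v = fun j => signVec s j * v j :=
      funext (mulVec_diagonal _ _)
    simp only [rlcA, smul_mulVec, ← mulVec_mulVec, hdiag, smul_dotProduct, dotProduct_smul,
      smul_eq_mul, ← mul_assoc]
    rw [← mul_inv, Real.mul_self_sqrt (Nat.cast_nonneg m)]
    simp only [dotProduct, mulVec, ← sq]
    congr 2 with k
    exact congrArg (· ^ 2) (Finset.sum_congr rfl fun j _ => by ring)
  have hm' : (m : ℝ) ≠ 0 := by exact_mod_cast hm.ne'
  simp only [hrow, ← Finset.mul_sum]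
  rw [Finset.sum_comm]
  simp only [sum_sq_sum_mul_signVec, mul_pow, hH, one_mul, Finset.sum_const, Finset.card_univ,
    Fintype.card_fin, nsmul_eq_mul]
  field_simp
  simp [dotProduct, sq]

end RandomLinearCode

theorem rlc_quantized_compression_bound_general (m d : ℕ) (hm : 0 < m)
    (ε : ℝ)
    (H : Matrix (Fin m) (Fin d) ℝ)
    (hH : ∀ i j, H i j = 1 ∨ H i j = -1)
    (horth : H * Hᵀ = (d : ℝ) • (1 : Matrix (Fin m) (Fin m) ℝ))
    (uvec : Fin m → ℝ) (huvec : ∀ k, |uvec k| ≤ ε)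
    (U : Matrix (Fin m) (Fin m) ℝ) (hU : U = Matrix.diagonal uvec)
    (u : EuclideanSpace ℝ (Fin d)) :
    ((2 : ℝ) ^ d)⁻¹ *
        ∑ s : Fin d → Bool,
          ‖(WithLp.equiv 2 (Fin d → ℝ)).symm
              (WithLp.equiv 2 (Fin d → ℝ) u - ((m : ℝ) / d) •
                ((rlcA m d H (signVec s))ᵀ *ᵥ
                  (((1 : Matrix (Fin m) (Fin m) ℝ) - U) *ᵥ
                    (rlcA m d H (signVec s) *ᵥ WithLp.equiv 2 (Fin d → ℝ) u))))‖ ^ 2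
      ≤ (1 - (m : ℝ) / d + ((m : ℝ) / d) * ε ^ 2) * ‖u‖ ^ 2 := by
  subst hU
  set v := WithLp.equiv 2 (Fin d → ℝ) u
  have hH_sq : ∀ k j, H k j ^ 2 = 1 := fun k j => by rcases hH k j with h | h <;> simp [h]
  have hnorm : ‖u‖ ^ 2 = v ⬝ᵥ v := norm_symm_equiv_sq v
  simp only [norm_symm_equiv_sq]
  calc _ ≤ ((2 : ℝ) ^ d)⁻¹ * ∑ s : Fin d → Bool, (v ⬝ᵥ v + (m / d) * (ε ^ 2 - 1) *
          ((rlcA m d H (signVec s) *ᵥ v) ⬝ᵥ (rlcA m d H (signVec s) *ᵥ v))) := by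
        gcongr with s
        exact dotProduct_self_sub_smul_transpose_mulVec_le _ (by positivity)
          (rlcA_mul_transpose H horth s) huvec v
    _ = (1 - (m : ℝ) / d + ((m : ℝ) / d) * ε ^ 2) * ‖u‖ ^ 2 := by
        rw [Finset.sum_add_distrib, ← Finset.mul_sum, sum_rlcA_mulVec_dotProduct_self H hm hH_sq,
          Finset.sum_const, Finset.card_univ, Fintype.card_fun, Fintype.card_bool,
          Fintype.card_fin, nsmul_eq_mul, hnorm]
        push_cast
        field_simp
        ring

/-- Let `U` be a fixed `m × m` real diagonal matrix whose diagonal entries all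
have absolute value at most `ε` (modeling relative quantization error, so that the quantizer
output of `A(r)·u` is `(I_m − U)·A(r)·u`). Then for every `u ∈ ℝ^d`,
`𝔼_r‖u − (m/d)·A(r)ᵀ·(I_m − U)·A(r)·u‖² ≤ (1 − m/d + (m/d)·ε²)·‖u‖²`. -/
theorem rlc_quantized_compression_bound (m d : ℕ) (hm : 0 < m) (hmd : m ≤ d)
    (ε : ℝ) (hε : 0 ≤ ε)
    (H : Matrix (Fin m) (Fin d) ℝ)
    (hH : ∀ i j, H i j = 1 ∨ H i j = -1)
    (horth : H * Hᵀ = (d : ℝ) • (1 : Matrix (Fin m) (Fin m) ℝ))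
    (uvec : Fin m → ℝ) (huvec : ∀ k, |uvec k| ≤ ε)
    (U : Matrix (Fin m) (Fin m) ℝ) (hU : U = Matrix.diagonal uvec)
    (u : EuclideanSpace ℝ (Fin d)) :
    ((2 : ℝ) ^ d)⁻¹ *
        ∑ s : Fin d → Bool,
          ‖(WithLp.equiv 2 (Fin d → ℝ)).symm
              (WithLp.equiv 2 (Fin d → ℝ) u - ((m : ℝ) / d) •
                ((rlcA m d H (signVec s))ᵀ *ᵥ
                  (((1 : Matrix (Fin m) (Fin m) ℝ) - U) *ᵥ
                    (rlcA m d H (signVec s) *ᵥ WithLp.equiv 2 (Fin d → ℝ) u))))‖ ^ 2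
      ≤ (1 - (m : ℝ) / d + ((m : ℝ) / d) * ε ^ 2) * ‖u‖ ^ 2 :=
  rlc_quantized_compression_bound_general m d hm ε H hH horth uvec huvec U hU u
end

section
/- Let W be a symmetric doubly stochastic K × K real matrix, δ = 1 − ‖W − 𝟙𝟙ᵀ/K‖₂, β = ‖I_K − W‖₂, and let ζ ∈ [0, 1] and α > 0. Then for all d × K real matrices Θ and Θ̂, with Θ̄ = Θ·(𝟙𝟙ᵀ/K), ‖(Θ − Θ̄)·(I_K + ζ(W − I_K)) + ζ·(Θ̂ − Θ)·(W − I_K)‖_F² ≤ (1 + α)·(1 − δζ)²·‖Θ − Θ̄‖_F² + (1 + α⁻¹)·β²·ζ²·‖Θ̂ − Θ‖_F². (This is the deterministic core of the variant of Lemma 17 used for the noisy analog consensus update.) -/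
open Matrix BigOperators

/-- The spectral (ℓ²-operator) norm of a real matrix. -/
noncomputable def specNorm {a b : ℕ} (M : Matrix (Fin a) (Fin b) ℝ) : ℝ :=
  ‖LinearMap.toContinuousLinearMap (Matrix.toEuclideanLin M)‖

/-- The squared Frobenius norm `‖M‖_F²` of a real matrix. -/
noncomputable def frobSq {a b : ℕ} (M : Matrix (Fin a) (Fin b) ℝ) : ℝ :=
  ∑ i, ∑ j, (M i j) ^ 2

/-!
Since `P = 𝟙𝟙ᵀ/K` is an orthogonal projection, `(Θ - ΘP)P = 0`, so on `Θ - ΘP` the lazy step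
`I + ζ(W - I)` may be replaced by `(1 - ζ)(I - P) + ζ(W - P)`, whose spectral norm is at most
`(1 - ζ) + ζ‖W - P‖₂ = 1 - δζ`. Multiplying on the right by a matrix scales the Frobenius norm by at
most its spectral norm (row by row), and Young's inequality
`‖A + B‖² ≤ (1 + α)‖A‖² + (1 + α⁻¹)‖B‖²` splits the two terms.
-/

open scoped Matrix.Norms.L2Operator

lemma specNorm_eq_l2_opNorm {a b : ℕ} (M : Matrix (Fin a) (Fin b) ℝ) : specNorm M = ‖M‖ := rfl

lemma frobSq_eq_sum_norm_sq_rows {a b : ℕ} (X : Matrix (Fin a) (Fin b) ℝ) :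
    frobSq X = ∑ i, ‖(EuclideanSpace.equiv (Fin b) ℝ).symm (X i)‖ ^ 2 := by
  simp [frobSq, EuclideanSpace.norm_sq_eq]

lemma frobSq_nonneg {a b : ℕ} (X : Matrix (Fin a) (Fin b) ℝ) : 0 ≤ frobSq X := by
  unfold frobSq; positivity

lemma frobSq_smul {a b : ℕ} (c : ℝ) (X : Matrix (Fin a) (Fin b) ℝ) :
    frobSq (c • X) = c ^ 2 * frobSq X := by
  simp [frobSq, Finset.mul_sum, mul_pow]

lemma frobSq_mul_le {a b c : ℕ} (X : Matrix (Fin a) (Fin b) ℝ) (M : Matrix (Fin b) (Fin c) ℝ) :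
    frobSq (X * M) ≤ ‖M‖ ^ 2 * frobSq X := by
  rw [frobSq_eq_sum_norm_sq_rows, frobSq_eq_sum_norm_sq_rows, Finset.mul_sum]
  gcongr with i
  have hnorm : ‖Mᵀ‖ = ‖M‖ := by
    rw [← conjTranspose_eq_transpose_of_trivial, l2_opNorm_conjTranspose]
  calc ‖(EuclideanSpace.equiv (Fin c) ℝ).symm ((X * M) i)‖ ^ 2
      = ‖(EuclideanSpace.equiv (Fin c) ℝ).symm (Mᵀ *ᵥ X i)‖ ^ 2 := by
        rw [mulVec_transpose, mul_apply_eq_vecMul]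
    _ ≤ (‖Mᵀ‖ * ‖(EuclideanSpace.equiv (Fin b) ℝ).symm (X i)‖) ^ 2 := by
        gcongr; exact l2_opNorm_mulVec Mᵀ _
    _ = ‖M‖ ^ 2 * ‖(EuclideanSpace.equiv (Fin b) ℝ).symm (X i)‖ ^ 2 := by
        rw [hnorm, mul_pow]

lemma add_sq_le_of_pos {α : ℝ} (hα : 0 < α) (a b : ℝ) :
    (a + b) ^ 2 ≤ (1 + α) * a ^ 2 + (1 + α⁻¹) * b ^ 2 := by
  have key : (1 + α) * a ^ 2 + (1 + α⁻¹) * b ^ 2 - (a + b) ^ 2 = (α * a - b) ^ 2 / α := by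
    field_simp; ring
  nlinarith [div_nonneg (sq_nonneg (α * a - b)) hα.le]

lemma frobSq_add_le {a b : ℕ} {α : ℝ} (hα : 0 < α) (A B : Matrix (Fin a) (Fin b) ℝ) :
    frobSq (A + B) ≤ (1 + α) * frobSq A + (1 + α⁻¹) * frobSq B := by
  simp only [frobSq, Matrix.add_apply, Finset.mul_sum, ← Finset.sum_add_distrib]
  gcongr with i _ j _
  exact add_sq_le_of_pos hα _ _

lemma l2_opNorm_le_one_of_isHermitian_of_isIdempotentElem {n : Type*} [Fintype n]
    [DecidableEq n] {A : Matrix n n ℝ} (hA : A.IsHermitian) (hA' : IsIdempotentElem A) :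
    ‖A‖ ≤ 1 := by
  have h : ‖A‖ = ‖A‖ * ‖A‖ := by
    rw [← l2_opNorm_conjTranspose_mul_self, hA.eq, hA'.eq]
  nlinarith [norm_nonneg A]

noncomputable def avgMatrix (n : ℕ) : Matrix (Fin n) (Fin n) ℝ :=
  ((n : ℝ)⁻¹) • Matrix.of (fun (_ _ : Fin n) => (1 : ℝ))

lemma avgMatrix_isHermitian (n : ℕ) : (avgMatrix n).IsHermitian := by
  ext i j; simp [avgMatrix]

lemma avgMatrix_isIdempotentElem (n : ℕ) : IsIdempotentElem (avgMatrix n) := by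
  ext i j
  have hn : (n : ℝ) ≠ 0 := by exact_mod_cast i.pos.ne'
  simp [avgMatrix, mul_apply]
  field_simp

lemma l2_opNorm_one_sub_avgMatrix_le (n : ℕ) : ‖1 - avgMatrix n‖ ≤ 1 :=
  l2_opNorm_le_one_of_isHermitian_of_isIdempotentElem
    (isHermitian_one.sub (avgMatrix_isHermitian n)) (avgMatrix_isIdempotentElem n).one_sub

lemma sub_mul_avgMatrix_mul {d n : ℕ} (Θ : Matrix (Fin d) (Fin n) ℝ)
    (A : Matrix (Fin n) (Fin n) ℝ) :
    (Θ - Θ * avgMatrix n) * A = (Θ - Θ * avgMatrix n) * (A - avgMatrix n) := by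
  have h : (Θ - Θ * avgMatrix n) * avgMatrix n = 0 := by
    rw [Matrix.sub_mul, Matrix.mul_assoc, (avgMatrix_isIdempotentElem n).eq, sub_self]
  rw [Matrix.mul_sub, h, sub_zero]

lemma l2_opNorm_lazy_gossip_le {n : ℕ} (W : Matrix (Fin n) (Fin n) ℝ) {ζ : ℝ} (hζ0 : 0 ≤ ζ)
    (hζ1 : ζ ≤ 1) :
    ‖1 + ζ • (W - 1) - avgMatrix n‖ ≤ 1 - (1 - ‖W - avgMatrix n‖) * ζ := by
  have hconvex : 1 + ζ • (W - 1) - avgMatrix n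
      = (1 - ζ) • (1 - avgMatrix n) + ζ • (W - avgMatrix n) := by module
  rw [hconvex]
  calc ‖(1 - ζ) • (1 - avgMatrix n) + ζ • (W - avgMatrix n)‖
      ≤ (1 - ζ) * ‖1 - avgMatrix n‖ + ζ * ‖W - avgMatrix n‖ := by
        refine (norm_add_le _ _).trans_eq ?_
        rw [norm_smul, norm_smul, Real.norm_of_nonneg (by linarith), Real.norm_of_nonneg hζ0]
    _ ≤ (1 - ζ) * 1 + ζ * ‖W - avgMatrix n‖ := by
        gcongr
        exact l2_opNorm_one_sub_avgMatrix_le n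
    _ = 1 - (1 - ‖W - avgMatrix n‖) * ζ := by ring

theorem noisy_consensus_core_bound_general (K d : ℕ)
    (W : Matrix (Fin K) (Fin K) ℝ)
    (ζ α : ℝ) (hζ0 : 0 ≤ ζ) (hζ1 : ζ ≤ 1) (hα : 0 < α)
    (Θ Θhat : Matrix (Fin d) (Fin K) ℝ) :
    frobSq ((Θ - Θ * (((K : ℝ)⁻¹) • Matrix.of (fun (_ _ : Fin K) => (1 : ℝ)))) *
          ((1 : Matrix (Fin K) (Fin K) ℝ) + ζ • (W - 1))
        + ζ • ((Θhat - Θ) * (W - 1)))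
      ≤ (1 + α) *
          (1 - (1 - specNorm (W - ((K : ℝ)⁻¹) • Matrix.of (fun (_ _ : Fin K) => (1 : ℝ)))) * ζ) ^ 2 *
            frobSq (Θ - Θ * (((K : ℝ)⁻¹) • Matrix.of (fun (_ _ : Fin K) => (1 : ℝ))))
        + (1 + α⁻¹) * (specNorm ((1 : Matrix (Fin K) (Fin K) ℝ) - W)) ^ 2 * ζ ^ 2 *
            frobSq (Θhat - Θ) := by
  rw [show (K : ℝ)⁻¹ • Matrix.of (fun (_ _ : Fin K) => (1 : ℝ)) = avgMatrix K from rfl]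
  set X := Θ - Θ * avgMatrix K
  have hgossip : frobSq (X * (1 + ζ • (W - 1)))
      ≤ (1 - (1 - specNorm (W - avgMatrix K)) * ζ) ^ 2 * frobSq X := by
    rw [sub_mul_avgMatrix_mul]
    refine (frobSq_mul_le _ _).trans (mul_le_mul_of_nonneg_right ?_ (frobSq_nonneg X))
    exact pow_le_pow_left₀ (norm_nonneg _) (l2_opNorm_lazy_gossip_le W hζ0 hζ1) 2
  have hnoise : frobSq (ζ • ((Θhat - Θ) * (W - 1)))
      ≤ specNorm (1 - W) ^ 2 * ζ ^ 2 * frobSq (Θhat - Θ) := by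
    rw [frobSq_smul, specNorm_eq_l2_opNorm, norm_sub_rev, mul_comm (‖W - 1‖ ^ 2), mul_assoc]
    exact mul_le_mul_of_nonneg_left (frobSq_mul_le _ _) (sq_nonneg ζ)
  calc _ ≤ (1 + α) * frobSq (X * (1 + ζ • (W - 1)))
        + (1 + α⁻¹) * frobSq (ζ • ((Θhat - Θ) * (W - 1))) := frobSq_add_le hα _ _
    _ ≤ _ := by
      rw [mul_assoc (1 + α), mul_assoc (1 + α⁻¹), mul_assoc (1 + α⁻¹)]
      gcongr

/-- Let `W` be a symmetric doubly stochastic `K × K` real matrix,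
`δ = 1 − ‖W − 𝟙𝟙ᵀ/K‖₂`, `β = ‖I_K − W‖₂`, `ζ ∈ [0,1]` and `α > 0`. Then for all `d × K` real
matrices `Θ` and `Θ̂`, with `Θ̄ = Θ·(𝟙𝟙ᵀ/K)`,
`‖(Θ − Θ̄)·(I + ζ(W − I)) + ζ·(Θ̂ − Θ)·(W − I)‖_F² ≤ (1+α)(1−δζ)²‖Θ − Θ̄‖_F²
  + (1+α⁻¹)β²ζ²‖Θ̂ − Θ‖_F²`. -/
theorem noisy_consensus_core_bound (K d : ℕ) (hK : 0 < K)
    (W : Matrix (Fin K) (Fin K) ℝ) (hsymm : Wᵀ = W)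
    (hnonneg : ∀ i j, 0 ≤ W i j)
    (hrow : ∀ i, ∑ j, W i j = 1) (hcol : ∀ j, ∑ i, W i j = 1)
    (ζ α : ℝ) (hζ0 : 0 ≤ ζ) (hζ1 : ζ ≤ 1) (hα : 0 < α)
    (Θ Θhat : Matrix (Fin d) (Fin K) ℝ) :
    frobSq ((Θ - Θ * (((K : ℝ)⁻¹) • Matrix.of (fun (_ _ : Fin K) => (1 : ℝ)))) *
          ((1 : Matrix (Fin K) (Fin K) ℝ) + ζ • (W - 1))
        + ζ • ((Θhat - Θ) * (W - 1)))
      ≤ (1 + α) *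
          (1 - (1 - specNorm (W - ((K : ℝ)⁻¹) • Matrix.of (fun (_ _ : Fin K) => (1 : ℝ)))) * ζ) ^ 2 *
            frobSq (Θ - Θ * (((K : ℝ)⁻¹) • Matrix.of (fun (_ _ : Fin K) => (1 : ℝ))))
        + (1 + α⁻¹) * (specNorm ((1 : Matrix (Fin K) (Fin K) ℝ) - W)) ^ 2 * ζ ^ 2 *
            frobSq (Θhat - Θ) :=
  noisy_consensus_core_bound_general K d W ζ α hζ0 hζ1 hα Θ Θhat
end
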